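/- arXiv:2410.10102 — 5 statements merged into one kernel-verified Lean document; each statement's English description precedes it below -/
import Mathlib

section
/- Let I be a finite index set. For each i ∈ I, let H_i be a real symmetric n_i × n_i matrix and P_i an arbitrary real n_i × n matrix. Set H := Σ_i P_iᵀ H_i P_i and |H_e| := Σ_i P_iᵀ |H_i| P_i, where |H_i| is the absolute-value spectral projection of H_i. Then for every Δ ∈ ℝ and every u ∈ ℝⁿ, if uᵀ |H_e| u ≤ Δ then -Δ ≤ uᵀ H u ≤ Δ. -/
/-!
Since `|λ| - λ` and `|λ| + λ` are nonnegative, both `|H_i| - H_i` and `|H_i| + H_i` are positive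
semidefinite. Congruence by `P_i` and summation preserve this, so `|H_e| - H` and `|H_e| + H` are
positive semidefinite, which says exactly that `|uᵀ H u| ≤ uᵀ |H_e| u`.
-/

open Matrix

/-- Spectral map: apply `f` to the eigenvalues of a real symmetric matrix,
given an orthonormal eigendecomposition `A = U * diagonal λ * Uᴴ`. -/
noncomputable def specMap {m : Type*} [Fintype m] [DecidableEq m]
    (A : Matrix m m ℝ) (hA : A.IsHermitian) (f : ℝ → ℝ) : Matrix m m ℝ :=
  (hA.eigenvectorUnitary : Matrix m m ℝ) * Matrix.diagonal (f ∘ hA.eigenvalues) *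
    star (hA.eigenvectorUnitary : Matrix m m ℝ)

/-- Absolute-value spectral projection `|A| = Σ_k |λ_k| e_k e_kᵀ`. -/
noncomputable def absProj {m : Type*} [Fintype m] [DecidableEq m]
    (A : Matrix m m ℝ) (hA : A.IsHermitian) : Matrix m m ℝ :=
  specMap A hA (fun t => |t|)

/-- Clamped spectral projection `A⁺ = Σ_k max(λ_k, 0) e_k e_kᵀ`. -/
noncomputable def clampProj {m : Type*} [Fintype m] [DecidableEq m]
    (A : Matrix m m ℝ) (hA : A.IsHermitian) : Matrix m m ℝ :=
  specMap A hA (fun t => max t 0)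

namespace Matrix.IsHermitian

variable {m : Type*} [Fintype m] [DecidableEq m] {A : Matrix m m ℝ} (hA : A.IsHermitian)

lemma specMap_add (f g : ℝ → ℝ) :
    specMap A hA (f + g) = specMap A hA f + specMap A hA g := by
  rw [specMap, specMap, specMap, ← add_mul, ← mul_add, diagonal_add]
  rfl

lemma specMap_sub (f g : ℝ → ℝ) :
    specMap A hA (f - g) = specMap A hA f - specMap A hA g := by
  rw [specMap, specMap, specMap, ← sub_mul, ← mul_sub, diagonal_sub]
  rfl

lemma specMap_id : specMap A hA id = A := by
  conv_rhs => rw [hA.spectral_theorem]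
  rfl

lemma posSemidef_specMap {f : ℝ → ℝ} (hf : ∀ t, 0 ≤ f t) : (specMap A hA f).PosSemidef :=
  (PosSemidef.diagonal fun _ => hf _).mul_mul_conjTranspose_same _

lemma posSemidef_absProj_sub : (absProj A hA - A).PosSemidef := by
  rw [absProj, ← congrArg (_ - ·) hA.specMap_id, ← specMap_sub]
  exact hA.posSemidef_specMap fun t => sub_nonneg.2 (le_abs_self t)

lemma posSemidef_absProj_add : (absProj A hA + A).PosSemidef := by
  rw [absProj, ← congrArg (_ + ·) hA.specMap_id, ← specMap_add]
  exact hA.posSemidef_specMap fun t => neg_le_iff_add_nonneg.1 (neg_le_abs t)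

end Matrix.IsHermitian

lemma Matrix.abs_dotProduct_mulVec_le {n : Type*} [Fintype n] {A B : Matrix n n ℝ}
    (hsub : (B - A).PosSemidef) (hadd : (B + A).PosSemidef) (v : n → ℝ) :
    |v ⬝ᵥ A *ᵥ v| ≤ v ⬝ᵥ B *ᵥ v := by
  have hle := hsub.dotProduct_mulVec_nonneg v
  have hge := hadd.dotProduct_mulVec_nonneg v
  rw [star_trivial, sub_mulVec, dotProduct_sub] at hle
  rw [star_trivial, add_mulVec, dotProduct_add] at hge
  exact abs_le.2 ⟨by linarith, by linarith⟩

lemma Matrix.posSemidef_sum_transpose_mul_mul {ι : Type*} [Fintype ι] {m : ι → Type*}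
    [∀ i, Fintype (m i)] {k : Type*} [Fintype k] {A : ∀ i, Matrix (m i) (m i) ℝ}
    (hA : ∀ i, (A i).PosSemidef) (P : ∀ i, Matrix (m i) k ℝ) :
    (∑ i, (P i)ᵀ * A i * P i).PosSemidef :=
  posSemidef_sum _ fun i _ => (hA i).conjTranspose_mul_mul_same (P i)

/-- The tightened per-element trust-region constraint `uᵀ|H_e|u ≤ Δ` implies the
original generalized trust-region constraint `|uᵀ H u| ≤ Δ`. -/
theorem per_element_constraint_implies_trust_region
    {ι : Type*} [Fintype ι] {N : ℕ} (n : ι → ℕ)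
    (H : ∀ i, Matrix (Fin (n i)) (Fin (n i)) ℝ)
    (hH : ∀ i, (H i).IsHermitian)
    (P : ∀ i, Matrix (Fin (n i)) (Fin N) ℝ)
    (Δ : ℝ) (u : Fin N → ℝ)
    (h : u ⬝ᵥ (∑ i, (P i)ᵀ * absProj (H i) (hH i) * P i) *ᵥ u ≤ Δ) :
    -Δ ≤ u ⬝ᵥ (∑ i, (P i)ᵀ * H i * P i) *ᵥ u
      ∧ u ⬝ᵥ (∑ i, (P i)ᵀ * H i * P i) *ᵥ u ≤ Δ := by
  have hsub := posSemidef_sum_transpose_mul_mul (fun i => (hH i).posSemidef_absProj_sub) P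
  have hadd := posSemidef_sum_transpose_mul_mul (fun i => (hH i).posSemidef_absProj_add) P
  simp only [Matrix.mul_sub, Matrix.sub_mul, Finset.sum_sub_distrib] at hsub
  simp only [Matrix.mul_add, Matrix.add_mul, Finset.sum_add_distrib] at hadd
  exact abs_le.1 ((abs_dotProduct_mulVec_le hsub hadd u).trans h)
end

section
/- Let I be a finite index set. For each i ∈ I, let A_i be a real symmetric n_i × n_i matrix and P_i an arbitrary real n_i × n matrix. Set A := Σ_i P_iᵀ A_i P_i and A_e⁺ := Σ_i P_iᵀ A_i⁺ P_i, where A_i⁺ is the clamped spectral projection of A_i. Then for every x ∈ ℝⁿ, xᵀ A_e⁺ x ≥ max(xᵀ A x, 0); in particular A_e⁺ is positive semidefinite. -/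
/-! In the Loewner order, `max t 0` dominates both `t` and `0`, so spectral calculus gives
`A_i ≤ A_i⁺` and `0 ≤ A_i⁺`; congruence by `P_i` and summation over `i` preserve the order,
and quadratic forms are monotone in it. -/

open Matrix

open scoped MatrixOrder ComplexOrder

namespace Matrix

variable {𝕜 m n : Type*} [RCLike 𝕜] [Fintype m] [Fintype n]

lemma conjTranspose_mul_mul_le_conjTranspose_mul_mul {A B : Matrix m m 𝕜} (h : A ≤ B)
    (P : Matrix m n 𝕜) : Pᴴ * A * P ≤ Pᴴ * B * P := by
  rw [le_iff, ← Matrix.sub_mul, ← Matrix.mul_sub]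
  exact h.conjTranspose_mul_mul_same P

lemma dotProduct_mulVec_le_of_le {A B : Matrix n n 𝕜} (h : A ≤ B) (x : n → 𝕜) :
    star x ⬝ᵥ A *ᵥ x ≤ star x ⬝ᵥ B *ᵥ x := by
  have hdiff := (le_iff.mp h).dotProduct_mulVec_nonneg x
  rwa [sub_mulVec, dotProduct_sub, sub_nonneg] at hdiff

end Matrix

section specMap

variable {m : Type*} [Fintype m] [DecidableEq m] (A : Matrix m m ℝ) (hA : A.IsHermitian)

lemma specMap_id : specMap A hA id = A := by
  simpa [specMap] using hA.spectral_theorem.symm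

lemma specMap_zero : specMap A hA 0 = 0 := by
  simp [specMap]

lemma specMap_mono {f g : ℝ → ℝ} (hfg : ∀ t, f t ≤ g t) :
    specMap A hA f ≤ specMap A hA g := by
  rw [Matrix.le_iff, specMap, specMap, ← Matrix.sub_mul, ← Matrix.mul_sub, diagonal_sub,
    star_eq_conjTranspose]
  exact (posSemidef_diagonal_iff.mpr fun i => sub_nonneg.mpr (hfg _)).mul_mul_conjTranspose_same _

lemma clampProj_nonneg : 0 ≤ clampProj A hA := by
  rw [← specMap_zero A hA]
  exact specMap_mono A hA fun t => le_max_right t 0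

lemma le_clampProj : A ≤ clampProj A hA := by
  conv_lhs => rw [← specMap_id A hA]
  exact specMap_mono A hA fun t => le_max_left t 0

end specMap

/-- Per-element eigenvalue clamping yields a positive semidefinite assembled
matrix dominating the original assembled quadratic form. -/
theorem per_element_clamp_dominates_and_posSemidef
    {ι : Type*} [Fintype ι] {N : ℕ} (n : ι → ℕ)
    (A : ∀ i, Matrix (Fin (n i)) (Fin (n i)) ℝ)
    (hA : ∀ i, (A i).IsHermitian)
    (P : ∀ i, Matrix (Fin (n i)) (Fin N) ℝ) :
    (∀ x : Fin N → ℝ,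
        max (x ⬝ᵥ (∑ i, (P i)ᵀ * A i * P i) *ᵥ x) 0
          ≤ x ⬝ᵥ (∑ i, (P i)ᵀ * clampProj (A i) (hA i) * P i) *ᵥ x)
      ∧ (∑ i, (P i)ᵀ * clampProj (A i) (hA i) * P i).PosSemidef := by
  have hnonneg : 0 ≤ ∑ i, (P i)ᵀ * clampProj (A i) (hA i) * P i :=
    Finset.sum_nonneg fun i _ => by
      simpa using
        conjTranspose_mul_mul_le_conjTranspose_mul_mul (clampProj_nonneg (A i) (hA i)) (P i)
  have hdom : ∑ i, (P i)ᵀ * A i * P i ≤ ∑ i, (P i)ᵀ * clampProj (A i) (hA i) * P i :=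
    Finset.sum_le_sum fun i _ => by
      simpa using conjTranspose_mul_mul_le_conjTranspose_mul_mul (le_clampProj (A i) (hA i)) (P i)
  refine ⟨fun x => max_le ?_ ?_, hnonneg.posSemidef⟩
  · simpa using dotProduct_mulVec_le_of_le hdom x
  · simpa using hnonneg.posSemidef.dotProduct_mulVec_nonneg x
end

section
/- Let I be a finite index set, ε > 0, and for each i ∈ I let H_i be a real symmetric n_i × n_i matrix and P_i a real n_i × n matrix. Let H_i^(ε) denote the matrix obtained from H_i by replacing every eigenvalue λ_k of H_i with max(λ_k, ε) in its orthonormal eigendecomposition. If Σ_i P_iᵀ P_i is positive definite, then the assembled matrix Σ_i P_iᵀ H_i^(ε) P_i is positive definite. -/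
open Matrix

/-- ε-clamped spectral projection: replace each eigenvalue `λ_k` by `max (λ_k) ε`. -/
noncomputable def epsClampProj {m : Type*} [Fintype m] [DecidableEq m]
    (A : Matrix m m ℝ) (hA : A.IsHermitian) (ε : ℝ) : Matrix m m ℝ :=
  specMap A hA (fun t => max t ε)

/-! Clamping at `ε` makes every `H_i^(ε) - ε • 1` positive semidefinite, so the assembled matrix
is a positive semidefinite matrix plus `ε • ∑ i, (P i)ᵀ * P i`. -/

section SpecMap

variable {m : Type*} [Fintype m] [DecidableEq m] {A : Matrix m m ℝ}

lemma specMap_sub (hA : A.IsHermitian) (f g : ℝ → ℝ) :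
    specMap A hA f - specMap A hA g = specMap A hA (f - g) := by
  rw [specMap, specMap, specMap, ← Matrix.sub_mul, ← Matrix.mul_sub, diagonal_sub]
  rfl

lemma specMap_const (hA : A.IsHermitian) (c : ℝ) : specMap A hA (fun _ => c) = c • 1 := by
  rw [specMap, Function.comp_def, ← smul_one_eq_diagonal, Matrix.mul_smul, Matrix.mul_one,
    Matrix.smul_mul, Unitary.mul_star_self_of_mem hA.eigenvectorUnitary.2]

lemma specMap_posSemidef (hA : A.IsHermitian) {f : ℝ → ℝ} (hf : ∀ k, 0 ≤ f (hA.eigenvalues k)) :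
    (specMap A hA f).PosSemidef :=
  (posSemidef_diagonal_iff.mpr hf).mul_mul_conjTranspose_same _

lemma epsClampProj_sub_smul_one_posSemidef (hA : A.IsHermitian) (ε : ℝ) :
    (epsClampProj A hA ε - ε • 1).PosSemidef := by
  rw [epsClampProj, ← specMap_const hA ε, specMap_sub]
  exact specMap_posSemidef hA fun k => sub_nonneg.mpr (le_max_right _ _)

end SpecMap

lemma posDef_sum_transpose_mul_mul {ι : Type*} [Fintype ι] {m : ι → Type*}
    [∀ i, Fintype (m i)] [∀ i, DecidableEq (m i)] {N : Type*} [Finite N] {c : ℝ} (hc : 0 < c)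
    (A : ∀ i, Matrix (m i) (m i) ℝ) (hA : ∀ i, (A i - c • 1).PosSemidef)
    (P : ∀ i, Matrix (m i) N ℝ) (hP : (∑ i, (P i)ᵀ * P i).PosDef) :
    (∑ i, (P i)ᵀ * A i * P i).PosDef := by
  have hsplit : ∑ i, (P i)ᵀ * A i * P i
      = ∑ i, (P i)ᵀ * (A i - c • 1) * P i + c • ∑ i, (P i)ᵀ * P i := by
    simp only [Matrix.mul_sub, Matrix.sub_mul, Matrix.mul_smul, Matrix.smul_mul, Matrix.mul_one,
      Finset.sum_sub_distrib, Finset.smul_sum, sub_add_cancel]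
  have hconj : ∀ i, ((P i)ᵀ * (A i - c • 1) * P i).PosSemidef := fun i => by
    simpa using (hA i).conjTranspose_mul_mul_same (P i)
  rw [hsplit]
  exact PosDef.posSemidef_add (posSemidef_sum _ fun i _ => hconj i) (hP.smul hc)

/-- Per-element eigenvalue clamping to a positive threshold yields a positive
definite global Hessian, provided every global degree of freedom is selected
by some element. -/
theorem per_element_eps_clamp_posDef
    {ι : Type*} [Fintype ι] {N : ℕ} (n : ι → ℕ) (ε : ℝ) (hε : 0 < ε)
    (H : ∀ i, Matrix (Fin (n i)) (Fin (n i)) ℝ)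
    (hH : ∀ i, (H i).IsHermitian)
    (P : ∀ i, Matrix (Fin (n i)) (Fin N) ℝ)
    (hP : (∑ i, (P i)ᵀ * P i).PosDef) :
    (∑ i, (P i)ᵀ * epsClampProj (H i) (hH i) ε * P i).PosDef :=
  posDef_sum_transpose_mul_mul hε (fun i => epsClampProj (H i) (hH i) ε)
    (fun i => epsClampProj_sub_smul_one_posSemidef (hH i) ε) P hP
end

section
/- Let I be a finite index set. For each i ∈ I, let A_i be an invertible real symmetric n_i × n_i matrix and P_i a real n_i × n matrix, and suppose Σ_i P_iᵀ P_i is positive definite. Then |A_e| := Σ_i P_iᵀ |A_i| P_i is positive definite, where |A_i| is the absolute-value spectral projection of A_i. -/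
open Matrix

/-!
Invertibility of `A i` makes all its eigenvalues nonzero, so `|A i|` is positive definite. The
quadratic form of `∑ i, (P i)ᵀ * |A i| * P i` at `x` is `∑ i, (P i x)ᵀ |A i| (P i x)`, a sum of
nonnegative terms, and positive definiteness of `∑ i, (P i)ᵀ * P i` gives some `j` with
`P j x ≠ 0`, whose term is then positive.
-/

namespace Matrix

variable {ι m R : Type*} [Fintype ι] [Fintype m] {n : ι → Type*} [∀ i, Fintype (n i)]

lemma star_dotProduct_conjTranspose_mul_mul_mulVec [CommRing R] [StarRing R] {k : Type*}
    [Fintype k] (B : Matrix k k R) (P : Matrix k m R) (x : m → R) :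
    star x ⬝ᵥ ((Pᴴ * B * P) *ᵥ x) = star (P *ᵥ x) ⬝ᵥ (B *ᵥ (P *ᵥ x)) := by
  simp only [star_mulVec, dotProduct_mulVec, vecMul_vecMul]

lemma exists_mulVec_ne_zero_of_posDef_sum [CommRing R] [PartialOrder R] [StarRing R]
    {P : ∀ i, Matrix (n i) m R} (hP : (∑ i, (P i)ᴴ * P i).PosDef) {x : m → R} (hx : x ≠ 0) :
    ∃ i, P i *ᵥ x ≠ 0 := by
  by_contra! h
  have hzero : (∑ i, (P i)ᴴ * P i) *ᵥ x = 0 := by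
    simp [sum_mulVec, ← mulVec_mulVec, h]
  simpa [hzero] using hP.dotProduct_mulVec_pos hx

theorem PosDef.sum_conjTranspose_mul_mul [CommRing R] [PartialOrder R] [StarRing R]
    [IsOrderedAddMonoid R] {B : ∀ i, Matrix (n i) (n i) R} (hB : ∀ i, (B i).PosDef)
    {P : ∀ i, Matrix (n i) m R} (hP : (∑ i, (P i)ᴴ * P i).PosDef) :
    (∑ i, (P i)ᴴ * B i * P i).PosDef := by
  refine PosDef.of_dotProduct_mulVec_pos ?_ fun x hx => ?_
  · exact (posSemidef_sum _ fun i _ =>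
      (hB i).posSemidef.conjTranspose_mul_mul_same (P i)).isHermitian
  obtain ⟨j, hj⟩ := exists_mulVec_ne_zero_of_posDef_sum hP hx
  simp only [sum_mulVec, dotProduct_sum, star_dotProduct_conjTranspose_mul_mul_mulVec]
  exact Finset.sum_pos' (fun i _ => (hB i).posSemidef.dotProduct_mulVec_nonneg _)
    ⟨j, Finset.mem_univ j, (hB j).dotProduct_mulVec_pos hj⟩

end Matrix

lemma specMap_posDef {m : Type*} [Fintype m] [DecidableEq m] {A : Matrix m m ℝ}
    (hA : A.IsHermitian) {f : ℝ → ℝ} (hf : ∀ k, 0 < f (hA.eigenvalues k)) :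
    (specMap A hA f).PosDef :=
  (IsUnit.posDef_star_right_conjugate_iff Unitary.isUnit_coe).mpr
    (posDef_diagonal_iff.mpr hf)

lemma absProj_posDef {m : Type*} [Fintype m] [DecidableEq m] {A : Matrix m m ℝ}
    (hA : A.IsHermitian) (hunit : IsUnit A) : (absProj A hA).PosDef :=
  specMap_posDef hA fun k => abs_pos.mpr fun hk =>
    (spectrum.zero_mem_iff ℝ).mp (hk ▸ hA.eigenvalues_mem_spectrum_real k) hunit

/-- If every per-element symmetric matrix is invertible and every global degree
of freedom is selected by some element, the assembled absolute-value projection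
is positive definite. -/
theorem per_element_abs_projection_posDef
    {ι : Type*} [Fintype ι] {N : ℕ} (n : ι → ℕ)
    (A : ∀ i, Matrix (Fin (n i)) (Fin (n i)) ℝ)
    (hA : ∀ i, (A i).IsHermitian)
    (hinv : ∀ i, IsUnit (A i))
    (P : ∀ i, Matrix (Fin (n i)) (Fin N) ℝ)
    (hP : (∑ i, (P i)ᵀ * P i).PosDef) :
    (∑ i, (P i)ᵀ * absProj (A i) (hA i) * P i).PosDef := by
  simp only [← conjTranspose_eq_transpose_of_trivial] at hP ⊢
  exact PosDef.sum_conjTranspose_mul_mul (fun i => absProj_posDef (hA i) (hinv i)) hP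
end

section
/- Let B be a real symmetric positive definite n × n matrix, g ∈ ℝⁿ with g ≠ 0, and Δ > 0. Then the minimum of gᵀ u over the set {u ∈ ℝⁿ : uᵀ B u ≤ Δ} equals -√(Δ · gᵀ B⁻¹ g), and it is attained at u* = -√(Δ / (gᵀ B⁻¹ g)) · B⁻¹ g. -/
open Matrix

/-! Cauchy–Schwarz for the inner product `⟪x, y⟫ = xᵀ B y`, applied to `u` and `B⁻¹ g`, gives
`(gᵀ u)² ≤ (gᵀ B⁻¹ g) (uᵀ B u) ≤ Δ · gᵀ B⁻¹ g` on the trust region, so `gᵀ u ≥ -√(Δ · gᵀ B⁻¹ g)`.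
The multiple of `B⁻¹ g` on the boundary `uᵀ B u = Δ` pointing against `g` attains this bound. -/

theorem Real.sqrt_div_mul_self {x y : ℝ} (hy : 0 ≤ y) : √(x / y) * y = √(x * y) := by
  rw [Real.sqrt_div' x hy, div_mul_eq_mul_div, mul_div_assoc, Real.div_sqrt, Real.sqrt_mul' x hy]

namespace Matrix

variable {n : Type*} [Fintype n]

theorem smul_dotProduct_mulVec_smul {R : Type*} [CommSemiring R] (B : Matrix n n R) (t : R)
    (v : n → R) : (t • v) ⬝ᵥ B *ᵥ (t • v) = t ^ 2 * (v ⬝ᵥ B *ᵥ v) := by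
  rw [mulVec_smul, smul_dotProduct, dotProduct_smul, smul_eq_mul, smul_eq_mul, ← mul_assoc, sq]

variable [DecidableEq n]

theorem PosSemidef.sq_dotProduct_mulVec_le {B : Matrix n n ℝ} (hB : B.PosSemidef) (x y : n → ℝ) :
    (x ⬝ᵥ B *ᵥ y) ^ 2 ≤ (x ⬝ᵥ B *ᵥ x) * (y ⬝ᵥ B *ᵥ y) := by
  have hsymm : B.IsSymm := (conjTranspose_eq_transpose_of_trivial B).symm.trans hB.isHermitian.eq
  simpa only [toBilin'_apply'] using
    (toBilin' B).apply_sq_le_of_symm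
      (fun x => by simpa [toBilin'_apply'] using hB.re_dotProduct_nonneg x)
      (LinearMap.BilinForm.isSymm_iff.mp (isSymm_toBilin'_iff_isSymm.mpr hsymm)) x y

theorem mulVec_nonsing_inv_mulVec {B : Matrix n n ℝ} (hB : IsUnit B.det) (g : n → ℝ) :
    B *ᵥ (B⁻¹ *ᵥ g) = g := by
  rw [mulVec_mulVec, mul_nonsing_inv _ hB, one_mulVec]

theorem nonsing_inv_mulVec_dotProduct_mulVec_self {B : Matrix n n ℝ} (hB : IsUnit B.det)
    (g : n → ℝ) : (B⁻¹ *ᵥ g) ⬝ᵥ B *ᵥ (B⁻¹ *ᵥ g) = g ⬝ᵥ B⁻¹ *ᵥ g := by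
  rw [mulVec_nonsing_inv_mulVec hB, dotProduct_comm]

theorem PosDef.sq_dotProduct_le {B : Matrix n n ℝ} (hB : B.PosDef) (g u : n → ℝ) :
    (g ⬝ᵥ u) ^ 2 ≤ (g ⬝ᵥ B⁻¹ *ᵥ g) * (u ⬝ᵥ B *ᵥ u) := by
  have hcs := hB.posSemidef.sq_dotProduct_mulVec_le u (B⁻¹ *ᵥ g)
  rwa [nonsing_inv_mulVec_dotProduct_mulVec_self hB.det_pos.ne'.isUnit,
    mulVec_nonsing_inv_mulVec hB.det_pos.ne'.isUnit, dotProduct_comm u, mul_comm] at hcs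

theorem PosDef.neg_sqrt_le_dotProduct {B : Matrix n n ℝ} (hB : B.PosDef) (g : n → ℝ)
    {u : n → ℝ} {Δ : ℝ} (hu : u ⬝ᵥ B *ᵥ u ≤ Δ) :
    -√(Δ * (g ⬝ᵥ B⁻¹ *ᵥ g)) ≤ g ⬝ᵥ u := by
  have hc : 0 ≤ g ⬝ᵥ B⁻¹ *ᵥ g := by simpa using hB.inv.posSemidef.re_dotProduct_nonneg g
  have hsq : (g ⬝ᵥ u) ^ 2 ≤ Δ * (g ⬝ᵥ B⁻¹ *ᵥ g) :=
    calc (g ⬝ᵥ u) ^ 2 ≤ (g ⬝ᵥ B⁻¹ *ᵥ g) * (u ⬝ᵥ B *ᵥ u) := hB.sq_dotProduct_le g u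
      _ ≤ Δ * (g ⬝ᵥ B⁻¹ *ᵥ g) := by rw [mul_comm]; exact mul_le_mul_of_nonneg_right hu hc
  exact neg_le_of_abs_le (Real.abs_le_sqrt hsq)

end Matrix

/-- Minimizing the first-order model `gᵀ u` over the trust region
`{u : uᵀ B u ≤ Δ}` yields the value `-√(Δ · gᵀ B⁻¹ g)`, attained at
`u* = -√(Δ / (gᵀ B⁻¹ g)) • B⁻¹ g`. -/
theorem trust_region_linear_min
    {n : ℕ} (B : Matrix (Fin n) (Fin n) ℝ) (hB : B.PosDef)
    (g : Fin n → ℝ) (hg : g ≠ 0) (Δ : ℝ) (hΔ : 0 < Δ) :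
    IsLeast ((fun u => g ⬝ᵥ u) '' {u : Fin n → ℝ | u ⬝ᵥ B *ᵥ u ≤ Δ})
        (-Real.sqrt (Δ * (g ⬝ᵥ B⁻¹ *ᵥ g)))
      ∧ (-Real.sqrt (Δ / (g ⬝ᵥ B⁻¹ *ᵥ g)) • (B⁻¹ *ᵥ g)) ∈
          {u : Fin n → ℝ | u ⬝ᵥ B *ᵥ u ≤ Δ}
      ∧ g ⬝ᵥ (-Real.sqrt (Δ / (g ⬝ᵥ B⁻¹ *ᵥ g)) • (B⁻¹ *ᵥ g))
          = -Real.sqrt (Δ * (g ⬝ᵥ B⁻¹ *ᵥ g)) := by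
  set c := g ⬝ᵥ B⁻¹ *ᵥ g
  have hc : 0 < c := by simpa using hB.inv.re_dotProduct_pos hg
  have hmem : (-√(Δ / c) • (B⁻¹ *ᵥ g)) ⬝ᵥ B *ᵥ (-√(Δ / c) • (B⁻¹ *ᵥ g)) ≤ Δ := by
    rw [smul_dotProduct_mulVec_smul,
      nonsing_inv_mulVec_dotProduct_mulVec_self hB.det_pos.ne'.isUnit, neg_sq,
      Real.sq_sqrt (div_nonneg hΔ.le hc.le), div_mul_cancel₀ _ hc.ne']
  have hval : g ⬝ᵥ (-√(Δ / c) • (B⁻¹ *ᵥ g)) = -√(Δ * c) := by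
    rw [dotProduct_smul, smul_eq_mul, neg_mul, Real.sqrt_div_mul_self hc.le]
  refine ⟨⟨⟨_, hmem, hval⟩, ?_⟩, hmem, hval⟩
  rintro _ ⟨u, hu, rfl⟩
  exact hB.neg_sqrt_le_dotProduct g hu
end
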